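/- arXiv:1712.00586 — 3 statements merged into one kernel-verified Lean document; each statement's English description precedes it below -/
import Mathlib

section
/- Let S be a primitive finite collection of substitutions on a finite alphabet A and ν a fully supported measure on S^ℕ. Then there exists a unique fully supported Borel probability measure μ_ν on A^ℕ with 𝕊_ν μ_ν = μ_ν, and for every Borel probability measure μ on A^ℕ, the iterates 𝕊_ν^n μ converge to μ_ν in the vague topology (cylinder-wise). -/
open MeasureTheory Filter
open scoped Classical

def applySub {A S : Type*} (subst : S → A → List A) {N : ℕ}
    (s : Fin N → S) (b : Fin N → A) : List A :=
  (List.ofFn fun i => subst (s i) (b i)).flatten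

def trunc {A : Type*} [Inhabited A] (N : ℕ) (w : List A) : Fin N → A :=
  fun i => w.getD i.1 default

def chainT {A S : Type*} [Inhabited A] (subst : S → A → List A) {N : ℕ} :
    List (Fin N → S) → (Fin N → A) → (Fin N → A)
  | [], b => b
  | s :: rest, b => chainT subst rest (trunc N (applySub subst s b))

/-- Primitivity of a collection of substitutions. -/
def PrimitiveSub {A S : Type*} [Inhabited A] (subst : S → A → List A) : Prop :=
  ∀ N : ℕ, ∃ nN : ℕ, ∀ n ≥ nN, ∀ a b : Fin N → A,
    ∃ ss : List (Fin N → S), ss.length = n ∧ chainT subst ss b = a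

def cyl (A : Type*) {N : ℕ} (a : Fin N → A) : Set (ℕ → A) :=
  {x | ∀ i : Fin N, x i.1 = a i}

def cylS (S : Type*) {N : ℕ} (s : Fin N → S) : Set (ℕ → S) :=
  {x | ∀ i : Fin N, x i.1 = s i}

/-- The transition matrix M_N(a,b) = ∑_{s ∈ S^N : s(b) ⊒ a} ν[s]. -/
noncomputable def MN {A S : Type*} [Fintype A] [DecidableEq A] [Fintype S]
    [MeasurableSpace S] (subst : S → A → List A) (ν : Measure (ℕ → S)) (N : ℕ) :
    Matrix (Fin N → A) (Fin N → A) ℝ :=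
  Matrix.of fun a b => ∑ s : Fin N → S,
    if List.ofFn a <+: applySub subst s b then (ν (cylS S s)).toReal else 0

/-!
For each length `N`, the cylinder marginals of `𝕊_ν μ` are those of `μ` transformed by the
column-stochastic matrix `M_N = MN subst ν N`, and primitivity together with the full support
of `ν` makes some power of `M_N` entrywise positive. Doeblin's argument (an ℓ¹-contraction on
vectors of total mass zero) then yields a unique stationary probability vector `π_N`, which is
positive and attracts every probability vector. Summing out the last letter intertwines
`M_{N+1}` with `M_N`, so by uniqueness the `π_N` are consistent; they are realised by the image
of Lebesgue measure on `[0, 1)` under the map that reads off nested interval cells of lengths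
`π_N`. A probability measure on `ℕ → A` is determined by its cylinder values, which gives
uniqueness.
-/

section Words
variable {A S : Type*}

theorem length_le_length_applySub (subst : S → A → List A) (hne : ∀ σ a, subst σ a ≠ [])
    {N : ℕ} (s : Fin N → S) (b : Fin N → A) : N ≤ (applySub subst s b).length := by
  rw [applySub, List.length_flatten, List.map_ofFn, List.sum_ofFn]
  calc N = ∑ _i : Fin N, 1 := by simp
    _ ≤ _ := Finset.sum_le_sum fun i _ => List.length_pos_iff.2 (hne _ _)

theorem applySub_snoc (subst : S → A → List A) {N : ℕ} (s : Fin N → S) (σ : S)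
    (b : Fin N → A) (c : A) :
    applySub subst (Fin.snoc s σ) (Fin.snoc b c) = applySub subst s b ++ subst σ c := by
  rw [applySub, applySub, List.ofFn_succ']
  simp

variable [Inhabited A]

theorem ofFn_trunc {N : ℕ} {w : List A} (hw : N ≤ w.length) : List.ofFn (trunc N w) = w.take N :=
  List.ext_getElem (by simp [hw]) fun i hi _ => by
    have hiw : i < w.length := (List.length_ofFn (f := trunc N w) ▸ hi).trans_le hw
    simp [trunc, List.getElem?_eq_getElem hiw]

theorem ofFn_prefix_iff_trunc_eq {N : ℕ} {w : List A} (hw : N ≤ w.length) (a : Fin N → A) :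
    List.ofFn a <+: w ↔ trunc N w = a := by
  rw [List.prefix_iff_eq_take, List.length_ofFn, ← ofFn_trunc hw, List.ofFn_inj, eq_comm]

theorem trunc_append {N : ℕ} {w : List A} (t : List A) (hw : N ≤ w.length) :
    trunc N (w ++ t) = trunc N w :=
  funext fun i => by simp [trunc, List.getElem?_append_left (i.2.trans_le hw)]

theorem trunc_succ (N : ℕ) (w : List A) :
    trunc (N + 1) w = Fin.snoc (trunc N w) (w.getD N default) := by
  funext i
  cases i using Fin.lastCases <;> simp [trunc]

end Words

section Cylinders
variable {X : Type*}

theorem cyl_eq_preimage {N : ℕ} (a : Fin N → X) :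
    cyl X a = (fun (x : ℕ → X) (i : Fin N) => x i) ⁻¹' {a} := by
  ext x
  simp [cyl, funext_iff]

theorem cyl_snoc {N : ℕ} (a : Fin N → X) (c : X) :
    cyl X (Fin.snoc a c : Fin (N + 1) → X) = (fun x : ℕ → X => x N) ⁻¹' {c} ∩ cyl X a := by
  ext x
  simp [cyl, Fin.forall_fin_succ', and_comm]

theorem cyl_inter_cyl_of_le {N M : ℕ} (hNM : N ≤ M) (a : Fin N → X) (b : Fin M → X)
    (h : (cyl X a ∩ cyl X b).Nonempty) : cyl X a ∩ cyl X b = cyl X b := by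
  obtain ⟨x, hxa, hxb⟩ := h
  refine Set.inter_eq_right.2 fun y hy i => ?_
  have hi : (i : ℕ) < M := i.2.trans_le hNM
  rw [← hxa i, hy ⟨i, hi⟩, ← hxb ⟨i, hi⟩]

theorem isPiSystem_cyl :
    IsPiSystem {t : Set (ℕ → X) | ∃ (N : ℕ) (a : Fin N → X), t = cyl X a} := by
  rintro _ ⟨N, a, rfl⟩ _ ⟨M, b, rfl⟩ h
  rcases le_total N M with hNM | hMN
  · exact ⟨M, b, cyl_inter_cyl_of_le hNM a b h⟩
  · rw [Set.inter_comm] at h ⊢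
    exact ⟨N, a, cyl_inter_cyl_of_le hMN b a h⟩

variable [MeasurableSpace X] [MeasurableSingletonClass X]

theorem measurableSet_cyl {N : ℕ} (a : Fin N → X) : MeasurableSet (cyl X a) := by
  rw [cyl_eq_preimage]
  exact (measurableSet_singleton a).preimage (by fun_prop)

theorem sum_measure_cyl_snoc [Fintype X] (μ : Measure (ℕ → X)) {N : ℕ} (a : Fin N → X) :
    ∑ c, μ (cyl X (Fin.snoc a c : Fin (N + 1) → X)) = μ (cyl X a) := by
  simp_rw [cyl_snoc, ← Measure.restrict_apply' (measurableSet_cyl a)]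
  rw [sum_measure_preimage_singleton (μ := μ.restrict (cyl X a)) (f := fun x : ℕ → X => x N) _
    fun c _ => (measurableSet_singleton c).preimage (measurable_pi_apply _)]
  simp

theorem sum_measure_cyl_snoc_toReal [Fintype X] (μ : Measure (ℕ → X)) [IsFiniteMeasure μ] {N : ℕ}
    (a : Fin N → X) :
    ∑ c, (μ (cyl X (Fin.snoc a c : Fin (N + 1) → X))).toReal = (μ (cyl X a)).toReal := by
  rw [← ENNReal.toReal_sum fun c _ => measure_ne_top μ _, sum_measure_cyl_snoc]

theorem sum_measure_cyl [Fintype X] (μ : Measure (ℕ → X)) [IsProbabilityMeasure μ] (N : ℕ) :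
    ∑ a : Fin N → X, μ (cyl X a) = 1 := by
  simp_rw [cyl_eq_preimage]
  rw [sum_measure_preimage_singleton _ fun a _ => (measurableSet_singleton a).preimage
    (by fun_prop)]
  simp

theorem sum_measure_cyl_toReal [Fintype X] (μ : Measure (ℕ → X)) [IsProbabilityMeasure μ] (N : ℕ) :
    ∑ a : Fin N → X, (μ (cyl X a)).toReal = 1 := by
  rw [← ENNReal.toReal_sum fun a _ => measure_ne_top μ _, sum_measure_cyl, ENNReal.toReal_one]

variable (X) in
theorem pi_eq_generateFrom_cyl [Countable X] :
    (MeasurableSpace.pi : MeasurableSpace (ℕ → X)) =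
      MeasurableSpace.generateFrom {t | ∃ (N : ℕ) (a : Fin N → X), t = cyl X a} := by
  refine le_antisymm (iSup_le fun n => measurable_iff_comap_le.1 ?_)
    (MeasurableSpace.generateFrom_le ?_)
  · refine @measurable_to_countable' _ _ _ _ (MeasurableSpace.generateFrom _) _ fun c => ?_
    have : (fun x : ℕ → X => x n) ⁻¹' {c} =
        ⋃ b : Fin n → X, cyl X (Fin.snoc b c : Fin (n + 1) → X) := by
      ext x
      simp only [cyl_snoc, Set.mem_iUnion, Set.mem_inter_iff]
      exact ⟨fun hx => ⟨fun i => x i, hx, fun i => rfl⟩, fun ⟨_, hx, _⟩ => hx⟩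
    rw [this]
    exact MeasurableSet.iUnion fun b => MeasurableSpace.measurableSet_generateFrom ⟨_, _, rfl⟩
  · rintro _ ⟨N, a, rfl⟩
    exact measurableSet_cyl a

theorem ext_of_cyl [Countable X] {μ μ' : Measure (ℕ → X)} [IsProbabilityMeasure μ]
    [IsProbabilityMeasure μ'] (h : ∀ (N : ℕ) (a : Fin N → X), μ (cyl X a) = μ' (cyl X a)) :
    μ = μ' :=
  ext_of_generate_finite _ (pi_eq_generateFrom_cyl X) isPiSystem_cyl
    (by rintro _ ⟨N, a, rfl⟩; exact h N a) (by simp)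

end Cylinders

namespace Matrix
variable {ι : Type*} [Fintype ι] [DecidableEq ι] {Q : Matrix ι ι ℝ}

theorem pow_mulVec_eq_self {v : ι → ℝ} (h : Q *ᵥ v = v) (n : ℕ) : (Q ^ n) *ᵥ v = v := by
  induction n with
  | zero => simp
  | succ n ih => rw [pow_succ, ← mulVec_mulVec, h, ih]

/-- `1` is a left eigenvector, so `Q - 1` is singular; the absolute value of a kernel vector is
again fixed, because `Q` cannot increase the total mass of `|u|`. -/
theorem exists_mulVec_eq_self_of_mem_colStochastic [Nonempty ι] (hQ : Q ∈ colStochastic ℝ ι) :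
    ∃ π : ι → ℝ, (∀ i, 0 ≤ π i) ∧ ∑ i, π i = 1 ∧ Q *ᵥ π = π := by
  have hdet : (Q - 1).det = 0 := exists_vecMul_eq_zero_iff.1
    ⟨1, one_ne_zero, by rw [vecMul_sub, one_vecMul_of_mem_colStochastic hQ, vecMul_one, sub_self]⟩
  obtain ⟨u, hu0, hu⟩ := exists_mulVec_eq_zero_iff.2 hdet
  rw [sub_mulVec, one_mulVec, sub_eq_zero] at hu
  have hle : ∀ i, |u i| ≤ (Q *ᵥ |u|) i := fun i => by
    conv_lhs => rw [← hu]
    refine (Finset.abs_sum_le_sum_abs _ _).trans_eq (Finset.sum_congr rfl fun j _ => ?_)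
    rw [abs_mul, abs_of_nonneg (hQ.1 i j)]
    rfl
  have habs : Q *ᵥ |u| = |u| := funext fun i => (((Finset.sum_eq_sum_iff_of_le
    fun i _ => hle i).1 (sum_mulVec_of_mem_colStochastic hQ).symm) i (Finset.mem_univ i)).symm
  have hmass : 0 < ∑ i, |u i| := by
    obtain ⟨i, hi⟩ := Function.ne_iff.1 hu0
    exact Finset.sum_pos' (fun j _ => abs_nonneg _) ⟨i, Finset.mem_univ i, abs_pos.2 hi⟩
  refine ⟨(∑ i, |u i|)⁻¹ • |u|, fun i => mul_nonneg (inv_nonneg.2 hmass.le) (abs_nonneg _), ?_,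
    by rw [mulVec_smul, habs]⟩
  simp [← Finset.mul_sum, hmass.ne']

theorem sum_abs_mulVec_le (hQ : Q ∈ colStochastic ℝ ι) (u : ι → ℝ) :
    ∑ i, |(Q *ᵥ u) i| ≤ ∑ i, |u i| :=
  calc ∑ i, |(Q *ᵥ u) i| ≤ ∑ i, ∑ j, Q i j * |u j| :=
        Finset.sum_le_sum fun i _ => (Finset.abs_sum_le_sum_abs _ _).trans_eq
          (Finset.sum_congr rfl fun j _ => by rw [abs_mul, abs_of_nonneg (hQ.1 i j)])
    _ = ∑ j, |u j| := by
        rw [Finset.sum_comm]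
        simp [← Finset.sum_mul, sum_col_of_mem_colStochastic hQ]

/-- Doeblin's contraction: subtracting the uniform lower bound `δ` from every entry does not
change `Q *ᵥ u` when `u` has total mass zero. -/
theorem sum_abs_mulVec_le_of_sum_eq_zero (hQ : Q ∈ colStochastic ℝ ι) {δ : ℝ}
    (hδ : ∀ i j, δ ≤ Q i j) {u : ι → ℝ} (hu : ∑ i, u i = 0) :
    ∑ i, |(Q *ᵥ u) i| ≤ (1 - Fintype.card ι * δ) * ∑ i, |u i| := by
  have hshift : ∀ i, (Q *ᵥ u) i = ∑ j, (Q i j - δ) * u j := fun i => by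
    simp only [sub_mul, Finset.sum_sub_distrib, ← Finset.mul_sum, hu, mul_zero, sub_zero]
    rfl
  calc ∑ i, |(Q *ᵥ u) i| ≤ ∑ i, ∑ j, (Q i j - δ) * |u j| :=
        Finset.sum_le_sum fun i _ => (hshift i ▸ Finset.abs_sum_le_sum_abs _ _).trans_eq
          (Finset.sum_congr rfl fun j _ => by rw [abs_mul, abs_of_nonneg (sub_nonneg.2 (hδ i j))])
    _ = (1 - Fintype.card ι * δ) * ∑ i, |u i| := by
        rw [Finset.sum_comm, Finset.mul_sum]
        simp [← Finset.sum_mul, Finset.sum_sub_distrib, sum_col_of_mem_colStochastic hQ]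

theorem one_sub_card_mul_nonneg [Nonempty ι] (hQ : Q ∈ colStochastic ℝ ι) {δ : ℝ}
    (hδ : ∀ i j, δ ≤ Q i j) : 0 ≤ 1 - Fintype.card ι * δ := by
  obtain ⟨j⟩ := ‹Nonempty ι›
  have := Finset.sum_le_sum fun i (_ : i ∈ Finset.univ) => hδ i j
  rw [sum_col_of_mem_colStochastic hQ] at this
  simpa using this

theorem sum_abs_pow_mulVec_le [Nonempty ι] (hQ : Q ∈ colStochastic ℝ ι) {m : ℕ} {δ : ℝ}
    (hδ : ∀ i j, δ ≤ (Q ^ m) i j) {u : ι → ℝ} (hu : ∑ i, u i = 0) (n : ℕ) :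
    ∑ i, |((Q ^ n) *ᵥ u) i| ≤ (1 - Fintype.card ι * δ) ^ (n / m) * ∑ i, |u i| := by
  have hQm := pow_mem hQ m
  have hθ := one_sub_card_mul_nonneg hQm hδ
  have hmass : ∀ k, ∑ i, ((Q ^ k) *ᵥ u) i = 0 := fun k => by
    rw [sum_mulVec_of_mem_colStochastic (pow_mem hQ k), hu]
  have hiter : ∀ k r, ∑ i, |(((Q ^ m) ^ k * Q ^ r) *ᵥ u) i| ≤
      (1 - Fintype.card ι * δ) ^ k * ∑ i, |u i| := by
    intro k r
    induction k with
    | zero => simpa using sum_abs_mulVec_le (pow_mem hQ r) u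
    | succ k ih =>
      rw [pow_succ', mul_assoc, ← mulVec_mulVec, pow_succ', mul_assoc]
      refine (sum_abs_mulVec_le_of_sum_eq_zero hQm hδ ?_).trans
        (mul_le_mul_of_nonneg_left ih hθ)
      rw [← pow_mul, ← pow_add]
      exact hmass _
  simpa [← pow_mul, ← pow_add, Nat.div_add_mod] using hiter (n / m) (n % m)

theorem exists_tendsto_pow_mulVec_of_pow_pos [Nonempty ι] (hQ : Q ∈ colStochastic ℝ ι)
    (hprim : ∃ m, 0 < m ∧ ∀ i j, 0 < (Q ^ m) i j) :
    ∃ π : ι → ℝ, (∀ i, 0 < π i) ∧ ∑ i, π i = 1 ∧ Q *ᵥ π = π ∧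
      (∀ v : ι → ℝ, ∑ i, v i = 1 → Tendsto (fun n => (Q ^ n) *ᵥ v) atTop (nhds π)) ∧
      (∀ v : ι → ℝ, ∑ i, v i = 1 → Q *ᵥ v = v → v = π) := by
  obtain ⟨m, hm, hpos⟩ := hprim
  obtain ⟨π, hπ0, hπsum, hπ⟩ := exists_mulVec_eq_self_of_mem_colStochastic hQ
  obtain ⟨δ, hδpos, hδ⟩ : ∃ δ > 0, ∀ i j, δ ≤ (Q ^ m) i j :=
    ⟨Finset.univ.inf' Finset.univ_nonempty fun p : ι × ι => (Q ^ m) p.1 p.2,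
      (Finset.lt_inf'_iff _).2 fun p _ => hpos p.1 p.2,
      fun i j => Finset.inf'_le _ (Finset.mem_univ (i, j))⟩
  have hθ : 1 - Fintype.card ι * δ < 1 := by
    have : (0 : ℝ) < Fintype.card ι := Nat.cast_pos.2 Fintype.card_pos
    nlinarith
  have hconv : ∀ v : ι → ℝ, ∑ i, v i = 1 → Tendsto (fun n => (Q ^ n) *ᵥ v) atTop (nhds π) := by
    intro v hv
    have hmass : ∑ i, (v - π) i = 0 := by simp [Finset.sum_sub_distrib, hv, hπsum]
    have hdecay : Tendsto (fun n => (1 - Fintype.card ι * δ) ^ (n / m) * ∑ i, |(v - π) i|)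
        atTop (nhds 0) := by
      simpa using ((tendsto_pow_atTop_nhds_zero_of_lt_one
        (one_sub_card_mul_nonneg (pow_mem hQ m) hδ) hθ).comp
        (Nat.tendsto_div_const_atTop hm.ne')).mul_const (∑ i, |(v - π) i|)
    have hzero : Tendsto (fun n => (Q ^ n) *ᵥ (v - π)) atTop (nhds 0) :=
      tendsto_pi_nhds.2 fun i => squeeze_zero_norm (fun n =>
        (Finset.single_le_sum (f := fun i => |((Q ^ n) *ᵥ (v - π)) i|)
          (fun i _ => abs_nonneg _) (Finset.mem_univ i)).trans
        (sum_abs_pow_mulVec_le hQ hδ hmass n)) hdecay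
    simpa [mulVec_sub, pow_mulVec_eq_self hπ] using hzero.add_const π
  refine ⟨π, fun i => ?_, hπsum, hπ, hconv, fun v hv hfix => ?_⟩
  · obtain ⟨j, -, hj⟩ := Finset.exists_lt_of_sum_lt (s := Finset.univ) (f := 0) (g := π)
      (by simp only [Pi.zero_apply, Finset.sum_const_zero, hπsum, zero_lt_one])
    rw [← pow_mulVec_eq_self hπ m]
    exact Finset.sum_pos' (fun k _ => mul_nonneg (hpos i k).le (hπ0 k))
      ⟨j, Finset.mem_univ j, mul_pos (hpos i j) hj⟩
  · refine tendsto_nhds_unique ?_ (hconv v hv)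
    simp [pow_mulVec_eq_self hfix]

end Matrix

section Marginals
variable {X : Type*} [Fintype X]

theorem sum_pi_fin_succ {M : Type*} [AddCommMonoid M] {N : ℕ}
    (f : (Fin (N + 1) → X) → M) : ∑ w, f w = ∑ b : Fin N → X, ∑ c, f (Fin.snoc b c) := by
  rw [← (Fin.snocEquiv fun _ => X).sum_comp, Fintype.sum_prod_type, Finset.sum_comm]
  rfl

def marginal {N : ℕ} (v : (Fin (N + 1) → X) → ℝ) (b : Fin N → X) : ℝ :=
  ∑ c, v (Fin.snoc b c)

theorem sum_marginal {N : ℕ} (v : (Fin (N + 1) → X) → ℝ) : ∑ b, marginal v b = ∑ w, v w :=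
  (sum_pi_fin_succ v).symm

/-- Candidate cylinder probabilities `p N a = μ (cyl X a)` of a probability measure `μ` on
`ℕ → X`. -/
structure IsConsistentFamily (p : ∀ N : ℕ, (Fin N → X) → ℝ) : Prop where
  nonneg : ∀ N a, 0 ≤ p N a
  sum_zero : ∑ a, p 0 a = 1
  marginal_succ : ∀ N, marginal (p (N + 1)) = p N

end Marginals

namespace IntervalCoding

section Offsets
variable {ι : Type*} [LinearOrder ι] {g : ι → ℝ}

theorem exists_mem_Ico_sum_filter_lt (s : Finset ι) {x : ℝ} (hx0 : 0 ≤ x)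
    (hx : x < ∑ i ∈ s, g i) :
    ∃ i ∈ s, x ∈ Set.Ico (∑ j ∈ s with j < i, g j) (∑ j ∈ s with j < i, g j + g i) := by
  induction s using Finset.induction_on_max with
  | empty => simp at hx; linarith
  | insert a s ha ih =>
    have has : a ∉ s := fun h => lt_irrefl a (ha a h)
    by_cases hxs : x < ∑ i ∈ s, g i
    · obtain ⟨i, hi, hxi⟩ := ih hxs
      have : ({j ∈ insert a s | j < i} : Finset ι) = {j ∈ s | j < i} := by
        rw [Finset.filter_insert, if_neg (ha i hi).not_gt]
      exact ⟨i, Finset.mem_insert_of_mem hi, by rwa [this]⟩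
    · have : ({j ∈ insert a s | j < a} : Finset ι) = s := by
        rw [Finset.filter_insert, if_neg (lt_irrefl a), Finset.filter_true_of_mem ha]
      rw [Finset.sum_insert has] at hx
      exact ⟨a, Finset.mem_insert_self a s, by rw [this]; constructor <;> linarith⟩

variable [Fintype ι]

def offset (g : ι → ℝ) (i : ι) : ℝ := ∑ j with j < i, g j

theorem exists_mem_Ico_offset {x : ℝ} (hx0 : 0 ≤ x) (hx : x < ∑ i, g i) :
    ∃ i, x ∈ Set.Ico (offset g i) (offset g i + g i) := by
  obtain ⟨i, -, hi⟩ := exists_mem_Ico_sum_filter_lt Finset.univ hx0 hx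
  exact ⟨i, hi⟩

theorem offset_nonneg (hg : ∀ i, 0 ≤ g i) (i : ι) : 0 ≤ offset g i :=
  Finset.sum_nonneg fun j _ => hg j

theorem offset_add_le_sum (hg : ∀ i, 0 ≤ g i) (i : ι) : offset g i + g i ≤ ∑ j, g j := by
  rw [offset, add_comm, ← Finset.sum_insert (by simp)]
  exact Finset.sum_le_sum_of_subset_of_nonneg (Finset.subset_univ _) fun j _ _ => hg j

theorem offset_add_le_offset (hg : ∀ i, 0 ≤ g i) {i j : ι} (hij : i < j) :
    offset g i + g i ≤ offset g j := by
  rw [offset, add_comm, ← Finset.sum_insert (by simp)]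
  refine Finset.sum_le_sum_of_subset_of_nonneg (fun k hk => ?_) fun k _ _ => hg k
  simp only [Finset.mem_insert, Finset.mem_filter, Finset.mem_univ, true_and] at hk ⊢
  rcases hk with rfl | hk
  exacts [hij, hk.trans hij]

theorem eq_of_mem_Ico_offset (hg : ∀ i, 0 ≤ g i) {i j : ι} {x : ℝ}
    (hi : x ∈ Set.Ico (offset g i) (offset g i + g i))
    (hj : x ∈ Set.Ico (offset g j) (offset g j + g j)) : i = j := by
  rcases lt_trichotomy i j with h | h | h
  · linarith [offset_add_le_offset hg h, hi.2, hj.1]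
  · exact h
  · linarith [offset_add_le_offset hg h, hj.2, hi.1]

end Offsets

section Cells
variable {A : Type*} [Fintype A] [LinearOrder A] (p : ∀ N : ℕ, (Fin N → A) → ℝ)

/-- Left endpoints of the nested cells: the cell of `Fin.snoc a c` is the `c`-th block of the
cell of `a`, subdivided in proportion to the weights `p (N + 1) (Fin.snoc a ·)`. -/
noncomputable def left : ∀ N : ℕ, (Fin N → A) → ℝ
  | 0, _ => 0
  | N + 1, w => left N (Fin.init w) +
      offset (fun c => p (N + 1) (Fin.snoc (Fin.init w) c)) (w (Fin.last N))

def cell (N : ℕ) (w : Fin N → A) : Set ℝ := Set.Ico (left p N w) (left p N w + p N w)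

theorem measurableSet_cell (N : ℕ) (w : Fin N → A) : MeasurableSet (cell p N w) :=
  measurableSet_Ico

variable {p}

theorem cell_zero (hp : IsConsistentFamily p) (w : Fin 0 → A) : cell p 0 w = Set.Ico 0 1 := by
  rw [cell, left, ← hp.sum_zero, Fintype.sum_unique, Subsingleton.elim w default, zero_add]

theorem mem_cell_snoc_iff {N : ℕ} {a : Fin N → A} {c : A} {x : ℝ} :
    x ∈ cell p (N + 1) (Fin.snoc a c) ↔ x - left p N a ∈
      Set.Ico (offset (fun c => p (N + 1) (Fin.snoc a c)) c)
        (offset (fun c => p (N + 1) (Fin.snoc a c)) c + p (N + 1) (Fin.snoc a c)) := by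
  simp only [cell, left, Fin.init_snoc, Fin.snoc_last, Set.mem_Ico]
  constructor <;> rintro ⟨h1, h2⟩ <;> constructor <;> linarith

theorem cell_snoc_subset (hp : IsConsistentFamily p) {N : ℕ} (a : Fin N → A) (c : A) :
    cell p (N + 1) (Fin.snoc a c) ⊆ cell p N a := by
  intro x hx
  have hg : ∀ c, 0 ≤ p (N + 1) (Fin.snoc a c) := fun c => hp.nonneg _ _
  have hx' := mem_cell_snoc_iff.1 hx
  have hsum : ∑ c, p (N + 1) (Fin.snoc a c) = p N a := congrFun (hp.marginal_succ N) a
  have := offset_nonneg hg c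
  have := offset_add_le_sum hg c
  exact ⟨by linarith [hx'.1], by linarith [hx'.2]⟩

theorem cell_subset_Ico (hp : IsConsistentFamily p) : ∀ (N : ℕ) (w : Fin N → A),
    cell p N w ⊆ Set.Ico 0 1
  | 0, w => (cell_zero hp w).subset
  | N + 1, w => by
    rw [← Fin.snoc_init_self w]
    exact (cell_snoc_subset hp _ _).trans (cell_subset_Ico hp N _)

theorem existsUnique_mem_cell (hp : IsConsistentFamily p) {x : ℝ} (hx : x ∈ Set.Ico 0 1) :
    ∀ N : ℕ, ∃! w : Fin N → A, x ∈ cell p N w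
  | 0 => ⟨default, show x ∈ cell p 0 default by rwa [cell_zero hp],
      fun w _ => Subsingleton.elim _ _⟩
  | N + 1 => by
    obtain ⟨a, ha, ha_uniq⟩ := existsUnique_mem_cell hp hx N
    have hg : ∀ c, 0 ≤ p (N + 1) (Fin.snoc a c) := fun c => hp.nonneg _ _
    have hsum : ∑ c, p (N + 1) (Fin.snoc a c) = p N a := congrFun (hp.marginal_succ N) a
    obtain ⟨c, hc⟩ := exists_mem_Ico_offset (g := fun c => p (N + 1) (Fin.snoc a c))
      (x := x - left p N a) (by linarith [ha.1]) (by rw [hsum]; linarith [ha.2])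
    refine ⟨Fin.snoc a c, mem_cell_snoc_iff.2 hc, fun w hw => ?_⟩
    rw [← Fin.snoc_init_self w] at hw ⊢
    obtain rfl := ha_uniq _ (cell_snoc_subset hp _ _ hw)
    rw [eq_of_mem_Ico_offset hg (mem_cell_snoc_iff.1 hw) hc]

end Cells

section Coding
variable {A : Type*} [Fintype A] [LinearOrder A] [Nonempty A] (p : ∀ N : ℕ, (Fin N → A) → ℝ)

noncomputable def cellIndex (N : ℕ) (x : ℝ) : Fin N → A :=
  Classical.epsilon fun w => x ∈ cell p N w

-- `Int.fract` makes the coding total and measurable; only its values on `[0, 1)` matter.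
noncomputable def code (x : ℝ) (n : ℕ) : A :=
  cellIndex p (n + 1) (Int.fract x) (Fin.last n)

variable {p}

theorem mem_cell_cellIndex (hp : IsConsistentFamily p) {x : ℝ} (hx : x ∈ Set.Ico 0 1)
    (N : ℕ) :
    x ∈ cell p N (cellIndex p N x) :=
  Classical.epsilon_spec (existsUnique_mem_cell hp hx N).exists

theorem cellIndex_eq (hp : IsConsistentFamily p) {N : ℕ} {w : Fin N → A} {x : ℝ}
    (h : x ∈ cell p N w) :
    cellIndex p N x = w :=
  have hx := cell_subset_Ico hp N w h
  (existsUnique_mem_cell hp hx N).unique (mem_cell_cellIndex hp hx N) h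

theorem init_cellIndex (hp : IsConsistentFamily p) {x : ℝ} (hx : x ∈ Set.Ico 0 1) (N : ℕ) :
    Fin.init (cellIndex p (N + 1) x) = cellIndex p N x := by
  have h := mem_cell_cellIndex hp hx (N + 1)
  rw [← Fin.snoc_init_self (cellIndex p (N + 1) x)] at h
  exact (cellIndex_eq hp (cell_snoc_subset hp _ _ h)).symm

theorem code_apply (hp : IsConsistentFamily p) (x : ℝ) :
    ∀ {N : ℕ} (i : Fin N), code p x i = cellIndex p N (Int.fract x) i
  | N + 1, i => by
    induction i using Fin.lastCases with
    | last => rfl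
    | cast j =>
      rw [Fin.val_castSucc, code_apply hp x j,
        ← init_cellIndex hp ⟨Int.fract_nonneg x, Int.fract_lt_one x⟩]
      rfl

theorem code_preimage_cyl (hp : IsConsistentFamily p) {N : ℕ} (w : Fin N → A) :
    code p ⁻¹' cyl A w = Int.fract ⁻¹' cell p N w := by
  ext x
  have hx : Int.fract x ∈ Set.Ico (0 : ℝ) 1 := ⟨Int.fract_nonneg x, Int.fract_lt_one x⟩
  simp only [Set.mem_preimage, cyl, Set.mem_ofPred_eq, code_apply hp]
  exact ⟨fun h => funext h ▸ mem_cell_cellIndex hp hx N,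
    fun h i => congrFun (cellIndex_eq hp h) i⟩

theorem measurable_code [MeasurableSpace A] [MeasurableSingletonClass A]
    (hp : IsConsistentFamily p) : Measurable (code p) :=
  (measurable_generateFrom (by
    rintro _ ⟨N, w, rfl⟩
    rw [code_preimage_cyl hp]
    exact measurable_fract (measurableSet_cell p N w))).mono le_rfl (pi_eq_generateFrom_cyl A).le

end Coding

end IntervalCoding

open IntervalCoding in
theorem exists_measure_cyl_eq {A : Type*} [Fintype A] [Nonempty A] [MeasurableSpace A]
    [MeasurableSingletonClass A] {p : ∀ N : ℕ, (Fin N → A) → ℝ} (hp : IsConsistentFamily p) :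
    ∃ μ : Measure (ℕ → A), IsProbabilityMeasure μ ∧
      ∀ (N : ℕ) (a : Fin N → A), μ (cyl A a) = ENNReal.ofReal (p N a) := by
  let : LinearOrder A := LinearOrder.lift' _ (Fintype.equivFin A).injective
  have hcode := measurable_code hp
  refine ⟨(volume.restrict (Set.Ico (0 : ℝ) 1)).map (code p), ⟨?_⟩, fun N a => ?_⟩
  · simp [Measure.map_apply hcode MeasurableSet.univ]
  · have hcell : Int.fract ⁻¹' cell p N a ∩ Set.Ico 0 1 = cell p N a := by
      refine Set.ext fun x => ⟨fun ⟨h, hx⟩ => ?_, fun h => ⟨?_, cell_subset_Ico hp N a h⟩⟩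
      · rwa [Set.mem_preimage, Int.fract_eq_self.2 hx] at h
      · rwa [Set.mem_preimage, Int.fract_eq_self.2 (cell_subset_Ico hp N a h)]
    rw [Measure.map_apply hcode (measurableSet_cyl a), code_preimage_cyl hp,
      Measure.restrict_apply (measurable_fract (measurableSet_cell p N a)), hcell, cell,
      Real.volume_Ico, add_sub_cancel_left]

section TransitionMatrix
open scoped Matrix
variable {A S : Type*} [Fintype A] [DecidableEq A] [Fintype S] [MeasurableSpace S]
  (subst : S → A → List A) (ν : Measure (ℕ → S))

theorem MN_mulVec_apply {N : ℕ} (u : (Fin N → A) → ℝ) (a : Fin N → A) :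
    (MN subst ν N *ᵥ u) a = ∑ s : Fin N → S, ∑ b : Fin N → A,
      if List.ofFn a <+: applySub subst s b then (ν (cylS S s)).toReal * u b else 0 := by
  simp only [Matrix.mulVec, dotProduct, MN, Matrix.of_apply, Finset.sum_mul, ite_mul, zero_mul]
  exact Finset.sum_comm

variable [Inhabited A] {subst}

theorem MN_apply (hne : ∀ σ a, subst σ a ≠ []) {N : ℕ} (a b : Fin N → A) :
    MN subst ν N a b =
      ∑ s, if trunc N (applySub subst s b) = a then (ν (cylS S s)).toReal else 0 :=
  Finset.sum_congr rfl fun s _ =>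
    if_congr (ofFn_prefix_iff_trunc_eq (length_le_length_applySub subst hne s b) a) rfl rfl

theorem MN_trunc_pos [IsFiniteMeasure ν] (hne : ∀ σ a, subst σ a ≠ [])
    (hfs : ∀ (N : ℕ) (s : Fin N → S), 0 < ν (cylS S s)) {N : ℕ} (s : Fin N → S) (b : Fin N → A) :
    0 < MN subst ν N (trunc N (applySub subst s b)) b := by
  rw [MN_apply ν hne]
  refine lt_of_lt_of_le ?_ (Finset.single_le_sum
    (fun s' _ => ite_nonneg ENNReal.toReal_nonneg le_rfl) (Finset.mem_univ s))
  rw [if_pos rfl]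
  exact ENNReal.toReal_pos (hfs N s).ne' (measure_ne_top ν _)

variable [MeasurableSingletonClass S]

theorem MN_mem_colStochastic [IsProbabilityMeasure ν] (hne : ∀ σ a, subst σ a ≠ []) (N : ℕ) :
    MN subst ν N ∈ Matrix.colStochastic ℝ (Fin N → A) := by
  refine Matrix.mem_colStochastic_iff_sum.2
    ⟨fun a b => Finset.sum_nonneg fun s _ => ite_nonneg ENNReal.toReal_nonneg le_rfl, fun b => ?_⟩
  simp_rw [MN_apply ν hne]
  rw [Finset.sum_comm]
  simp only [Finset.sum_ite_eq, Finset.mem_univ, if_true]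
  exact sum_measure_cyl_toReal ν N

/-- The first `N + 1` letters of `s(b)` are the first `N` letters of `(init s)(init b)` followed
by one more letter, so summing out the last letter of the image forgets the last letters of `s`
and `b`. -/
theorem sum_MN_snoc [IsFiniteMeasure ν] (hne : ∀ σ a, subst σ a ≠ []) {N : ℕ} (a : Fin N → A)
    (w : Fin (N + 1) → A) :
    ∑ c, MN subst ν (N + 1) (Fin.snoc a c) w = MN subst ν N a (Fin.init w) := by
  obtain ⟨b, d, rfl⟩ : ∃ b d, w = Fin.snoc b d := ⟨_, _, (Fin.snoc_init_self w).symm⟩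
  rw [Fin.init_snoc]
  have htrunc : ∀ s σ, trunc (N + 1) (applySub subst (Fin.snoc s σ) (Fin.snoc b d)) =
      Fin.snoc (trunc N (applySub subst s b)) ((applySub subst s b ++ subst σ d).getD N default) :=
    fun s σ => by
      rw [applySub_snoc, trunc_succ, trunc_append _ (length_le_length_applySub subst hne s b)]
  calc ∑ c, MN subst ν (N + 1) (Fin.snoc a c) (Fin.snoc b d)
      = ∑ s, ∑ σ, if trunc N (applySub subst s b) = a then
          (ν (cylS S (Fin.snoc s σ : Fin (N + 1) → S))).toReal else 0 := by
        simp_rw [MN_apply ν hne]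
        rw [Finset.sum_comm, sum_pi_fin_succ]
        refine Finset.sum_congr rfl fun s _ => Finset.sum_congr rfl fun σ _ => ?_
        simp_rw [htrunc, Fin.snoc_injective2.eq_iff]
        split_ifs with h <;> simp [h]
    _ = MN subst ν N a b := by
        rw [MN_apply ν hne]
        refine Finset.sum_congr rfl fun s _ => ?_
        split_ifs
        exacts [sum_measure_cyl_snoc_toReal ν s, Finset.sum_const_zero]

theorem MN_mulVec_marginal [IsFiniteMeasure ν] (hne : ∀ σ a, subst σ a ≠ []) {N : ℕ}
    (v : (Fin (N + 1) → A) → ℝ) :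
    MN subst ν N *ᵥ marginal v = marginal (MN subst ν (N + 1) *ᵥ v) := by
  funext a
  calc (MN subst ν N *ᵥ marginal v) a = ∑ w, MN subst ν N a (Fin.init w) * v w := by
        rw [sum_pi_fin_succ]
        simp [Matrix.mulVec, dotProduct, marginal, Finset.mul_sum]
    _ = ∑ w, ∑ c, MN subst ν (N + 1) (Fin.snoc a c) w * v w := by
        simp_rw [← sum_MN_snoc ν hne a, Finset.sum_mul]
    _ = marginal (MN subst ν (N + 1) *ᵥ v) a := Finset.sum_comm

theorem MN_pow_length_chainT_pos [IsProbabilityMeasure ν] (hne : ∀ σ a, subst σ a ≠ [])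
    (hfs : ∀ (N : ℕ) (s : Fin N → S), 0 < ν (cylS S s)) {N : ℕ} :
    ∀ (ss : List (Fin N → S)) (b : Fin N → A),
      0 < (MN subst ν N ^ ss.length) (chainT subst ss b) b
  | [], b => by simp [chainT]
  | s :: rest, b => by
    have hQ := MN_mem_colStochastic ν hne N
    rw [List.length_cons, pow_succ, Matrix.mul_apply]
    exact (mul_pos (MN_pow_length_chainT_pos hne hfs rest _) (MN_trunc_pos ν hne hfs s b)).trans_le
      (Finset.single_le_sum
        (f := fun d =>
          (MN subst ν N ^ rest.length) (chainT subst (s :: rest) b) d * MN subst ν N d b)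
        (fun d _ => mul_nonneg ((pow_mem hQ _).1 _ _) (hQ.1 _ _)) (Finset.mem_univ _))

theorem exists_pow_MN_pos [IsProbabilityMeasure ν] (hne : ∀ σ a, subst σ a ≠ [])
    (hfs : ∀ (N : ℕ) (s : Fin N → S), 0 < ν (cylS S s)) (hprim : PrimitiveSub subst) (N : ℕ) :
    ∃ m, 0 < m ∧ ∀ a b, 0 < (MN subst ν N ^ m) a b := by
  obtain ⟨n, hn⟩ := hprim N
  refine ⟨n + 1, n.succ_pos, fun a b => ?_⟩
  obtain ⟨ss, hlen, rfl⟩ := hn (n + 1) n.le_succ a b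
  exact hlen ▸ MN_pow_length_chainT_pos ν hne hfs ss b

end TransitionMatrix

theorem stmt5_general {A S : Type*} [Fintype A] [DecidableEq A] [Inhabited A]
    [MeasurableSpace A] [MeasurableSingletonClass A]
    [Fintype S] [MeasurableSpace S]
    [MeasurableSingletonClass S]
    (subst : S → A → List A) (hne : ∀ σ a, subst σ a ≠ [])
    (ν : Measure (ℕ → S)) [IsProbabilityMeasure ν]
    (hfs : ∀ (N : ℕ) (s : Fin N → S), 0 < ν (cylS S s))
    (hprim : PrimitiveSub subst) :
    ∃! μν : Measure (ℕ → A),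
      (IsProbabilityMeasure μν ∧
        (∀ (N : ℕ) (a : Fin N → A), 0 < μν (cyl A a)) ∧
        (∀ (N : ℕ) (a : Fin N → A), (μν (cyl A a)).toReal =
          ∑ s : Fin N → S, ∑ b : Fin N → A,
            if List.ofFn a <+: applySub subst s b then
              (ν (cylS S s)).toReal * (μν (cyl A b)).toReal else 0)) ∧
      (∀ μ : Measure (ℕ → A), IsProbabilityMeasure μ →
        ∀ (N : ℕ) (a : Fin N → A),
          Tendsto (fun n : ℕ =>
              ((MN subst ν N) ^ n).mulVec (fun b => (μ (cyl A b)).toReal) a)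
            atTop (nhds ((μν (cyl A a)).toReal))) := by
  choose π hπpos hπsum hπfix hπconv hπuniq using fun N =>
    Matrix.exists_tendsto_pow_mulVec_of_pow_pos (MN_mem_colStochastic ν hne N)
      (exists_pow_MN_pos ν hne hfs hprim N)
  have hπ : IsConsistentFamily π := ⟨fun N a => (hπpos N a).le, hπsum 0, fun N =>
    hπuniq N _ (by rw [sum_marginal, hπsum]) (by rw [MN_mulVec_marginal ν hne, hπfix])⟩
  obtain ⟨μν, hμν, hcyl⟩ := exists_measure_cyl_eq hπ
  have hreal : ∀ N a, (μν (cyl A a)).toReal = π N a := fun N a => by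
    rw [hcyl, ENNReal.toReal_ofReal (hπpos N a).le]
  refine ⟨μν, ⟨⟨hμν, fun N a => ?_, fun N a => ?_⟩, fun μ _ N a => ?_⟩, ?_⟩
  · exact hcyl N a ▸ ENNReal.ofReal_pos.2 (hπpos N a)
  · simp_rw [hreal, ← MN_mulVec_apply, hπfix]
  · rw [hreal]
    exact tendsto_pi_nhds.1 (hπconv N _ (sum_measure_cyl_toReal μ N)) a
  · rintro μ ⟨⟨hμ, -, hinv⟩, -⟩
    have hμπ : ∀ N, (fun b => (μ (cyl A b)).toReal) = π N := fun N =>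
      hπuniq N _ (sum_measure_cyl_toReal μ N) (funext fun a => by rw [MN_mulVec_apply, hinv])
    refine ext_of_cyl fun N a => ?_
    rw [hcyl, ← congrFun (hμπ N) a, ENNReal.ofReal_toReal (measure_ne_top μ _)]

/-- for a primitive finite collection S of substitutions and a fully
supported probability measure ν on S^ℕ, there is a unique fully supported Borel
probability measure μ_ν on A^ℕ invariant under the random substitution 𝕊_ν, and the
cylinder marginals of the iterates 𝕊_ν^n μ (given by (M_N)^n applied to the marginal
vector of μ) converge to those of μ_ν for every probability measure μ. -/
theorem stmt5 {A S : Type*} [Fintype A] [DecidableEq A] [Inhabited A] [Nonempty A]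
    [MeasurableSpace A] [MeasurableSingletonClass A]
    [Fintype S] [DecidableEq S] [Nonempty S] [MeasurableSpace S]
    [MeasurableSingletonClass S]
    (subst : S → A → List A) (hne : ∀ σ a, subst σ a ≠ [])
    (ν : Measure (ℕ → S)) [IsProbabilityMeasure ν]
    (hfs : ∀ (N : ℕ) (s : Fin N → S), 0 < ν (cylS S s))
    (hprim : PrimitiveSub subst) :
    ∃! μν : Measure (ℕ → A),
      (IsProbabilityMeasure μν ∧
        (∀ (N : ℕ) (a : Fin N → A), 0 < μν (cyl A a)) ∧
        (∀ (N : ℕ) (a : Fin N → A), (μν (cyl A a)).toReal =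
          ∑ s : Fin N → S, ∑ b : Fin N → A,
            if List.ofFn a <+: applySub subst s b then
              (ν (cylS S s)).toReal * (μν (cyl A b)).toReal else 0)) ∧
      (∀ μ : Measure (ℕ → A), IsProbabilityMeasure μ →
        ∀ (N : ℕ) (a : Fin N → A),
          Tendsto (fun n : ℕ =>
              ((MN subst ν N) ^ n).mulVec (fun b => (μ (cyl A b)).toReal) a)
            atTop (nhds ((μν (cyl A a)).toReal))) :=
  stmt5_general subst hne ν hfs hprim
end

section
/- Let A be a finite set, π_a : A → A permutations, σ_b(a) = (π_a b)a, ν the Bernoulli measure with ν[σ_b] = p(b) for a positive probability vector p, M(a',a) = p(π_a^{-1}a') with invariant probability vector q. Define, for each ℓ ≥ 0 and a ∈ A^{2^ℓ}, μ[a] = q(a_{2^ℓ}) · exp( ∑_{m=1}^{ℓ} ∑_{k=1}^{2^{ℓ−m}} log p(π_{a_{2^m k}}^{-1} a_{2^{m−1}(2k−1)}) ). Then these values are consistent (∑ over extensions of a word of length 2^ℓ to length 2^{ℓ+1} recovers μ[a]) and define a probability measure μ_ν on A^ℕ satisfying the substitution fixed-point equation μ_ν[a] = μ_ν[a_2 a_4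 ⋯ a_{2^ℓ}] ∏_{k=1}^{2^{ℓ−1}} p(π_{a_{2k}}^{-1} a_{2k−1}) for all a ∈ A^{2^ℓ}. -/
/-!
Without its factor `q (a (2 ^ ℓ - 1))`, `wordVal π p q ℓ a` is the probability that `ℓ` rounds of
the random substitution `c ↦ (π c b) c` (with `b` drawn from `p`), started from the last letter of
`a`, produce the first `2 ^ ℓ` letters of `a`. The fixed-point equation is this reading applied to
the last round. Splitting a word of length `2 ^ (ℓ + 1)` into halves factors that probability into
the probabilities of the two halves and the transition `p ((π c).symm a)` between their last
letters `a` and `c`. Summing over the second half therefore only uses that, for a fixed last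
letter, these probabilities add up to one, and that `q` is invariant under `M`: this gives
consistency.

Consistent weights on prefixes of lengths `N ℓ → ∞` over a finite alphabet always come from a
probability measure. Cut `[0, 1)` into intervals of lengths `w 0 u`, then cut each level-`ℓ`
interval into consecutive intervals of lengths `w (ℓ + 1) v`, one for each extension `v`. Lebesgue
measure is pushed forward along the map that sends `x` to the sequence whose prefixes label the
intervals containing `x`.
-/

open MeasureTheory

/-- Cylinder set fixing the coordinates in a finite set F. -/
def cylOn {A : Type*} (F : Finset ℕ) (a : ℕ → A) : Set (ℕ → A) :=
  {x | ∀ n ∈ F, x n = a n}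

/-- The candidate cylinder values (0-based indexing: the paper's a_j is `a (j-1)`):
v ℓ a = q(a_{2^ℓ}) · exp( ∑_{m=1}^{ℓ} ∑_{k=1}^{2^{ℓ−m}}
          log p(π_{a_{2^m k}}^{-1} a_{2^{m−1}(2k−1)}) ). -/
noncomputable def wordVal {A : Type*} [Fintype A]
    (π : A → Equiv.Perm A) (p q : A → ℝ) (ℓ : ℕ) (a : ℕ → A) : ℝ :=
  q (a (2 ^ ℓ - 1)) *
    Real.exp (∑ m ∈ Finset.Icc 1 ℓ, ∑ k ∈ Finset.Icc 1 (2 ^ (ℓ - m)),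
      Real.log (p ((π (a (2 ^ m * k - 1))).symm (a (2 ^ (m - 1) * (2 * k - 1) - 1)))))

/-- Extension of a word of length 2^ℓ by a second half c, giving a word of length
2^{ℓ+1}. -/
def extWord {A : Type*} (ℓ : ℕ) (a : ℕ → A) (c : Fin (2 ^ ℓ) → A) : ℕ → A :=
  fun n => if n < 2 ^ ℓ then a n
    else if h : n - 2 ^ ℓ < 2 ^ ℓ then c ⟨n - 2 ^ ℓ, h⟩ else a n

open Finset

section CylinderMeasure

open Set

lemma exists_Ico_partition {ι : Type*} (s : Finset ι) (v : ι → ℝ)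
    (hv : ∀ i ∈ s, 0 ≤ v i) (a : ℝ) :
    ∃ L : ι → ℝ, (∀ i ∈ s, Ico (L i) (L i + v i) ⊆ Ico a (a + ∑ i ∈ s, v i)) ∧
      ∀ x ∈ Ico a (a + ∑ i ∈ s, v i), ∃! i, i ∈ s ∧ x ∈ Ico (L i) (L i + v i) := by
  classical
  induction s using Finset.induction_on with
  | empty => exact ⟨0, by simp, by simp⟩
  | insert j s hj ih =>
    obtain ⟨L, hsub, hpart⟩ := ih fun i hi => hv i (mem_insert_of_mem hi)
    have hs : 0 ≤ ∑ i ∈ s, v i := sum_nonneg fun i hi => hv i (mem_insert_of_mem hi)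
    have hvj : 0 ≤ v j := hv j (mem_insert_self j s)
    obtain ⟨b, hb⟩ : ∃ b, b = a + ∑ i ∈ s, v i := ⟨_, rfl⟩
    have hL : ∀ i ∈ s, Function.update L j b i = L i := fun i hi =>
      Function.update_of_ne (ne_of_mem_of_not_mem hi hj) _ _
    rw [sum_insert hj, add_comm (v j), ← add_assoc, ← hb]
    rw [← hb] at hsub hpart
    -- the new index `j` gets the interval `[b, b + v j)` just after the old ones
    refine ⟨Function.update L j b, fun i hi => ?_, fun x hx => ?_⟩
    · rcases mem_insert.1 hi with rfl | hi
      · rw [Function.update_self]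
        exact Ico_subset_Ico (by linarith) le_rfl
      · rw [hL i hi]
        exact (hsub i hi).trans (Ico_subset_Ico le_rfl (by linarith))
    · rcases lt_or_ge x b with hxb | hxb
      · obtain ⟨i, ⟨hi, hxi⟩, huniq⟩ := hpart x ⟨hx.1, hxb⟩
        refine ⟨i, ⟨mem_insert_of_mem hi, by rwa [hL i hi]⟩, ?_⟩
        rintro k ⟨hk, hxk⟩
        rcases mem_insert.1 hk with rfl | hk
        · rw [Function.update_self] at hxk
          exact absurd hxk.1 (not_le.2 hxb)
        · exact huniq k ⟨hk, by rwa [hL k hk] at hxk⟩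
      · refine ⟨j, ⟨mem_insert_self j s, by rw [Function.update_self]; exact ⟨hxb, hx.2⟩⟩, ?_⟩
        rintro k ⟨hk, hxk⟩
        rcases mem_insert.1 hk with rfl | hk
        · rfl
        · rw [hL k hk] at hxk
          exact absurd (hsub k hk hxk).2 (not_lt.2 hxb)

lemma exists_Ico_refinement {α β : Type*} [Fintype β] [DecidableEq α]
    (f : β → α) (v : α → ℝ) (w : β → ℝ) (hw : ∀ b, 0 ≤ w b)
    (hcons : ∀ a, ∑ b with f b = a, w b = v a) (L : α → ℝ) :
    ∃ L' : β → ℝ, (∀ b, Ico (L' b) (L' b + w b) ⊆ Ico (L (f b)) (L (f b) + v (f b))) ∧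
      ∀ x, (∃! a, x ∈ Ico (L a) (L a + v a)) → ∃! b, x ∈ Ico (L' b) (L' b + w b) := by
  choose part hsub hpart using fun a =>
    exists_Ico_partition {b | f b = a} w (fun b _ => hw b) (L a)
  simp_rw [hcons] at hsub hpart
  refine ⟨fun b => part (f b) b, fun b => hsub (f b) b (by simp), fun x ⟨a, hxa, ha⟩ => ?_⟩
  obtain ⟨b, ⟨hb, hxb⟩, hbuniq⟩ := hpart a x hxa
  rw [mem_filter_univ] at hb
  refine ⟨b, by simpa only [hb] using hxb, fun b' hxb' => hbuniq b' ?_⟩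
  have hb' : f b' = a := ha _ (hsub (f b') b' (by simp) hxb')
  refine ⟨(mem_filter_univ _).2 hb', ?_⟩
  rw [← hb']
  exact hxb'

variable {A : Type*} {N : ℕ → ℕ}

lemma exists_nested_partitions [Fintype A] [DecidableEq A] (hN : ∀ ℓ, N ℓ ≤ N (ℓ + 1))
    (w : (ℓ : ℕ) → (Fin (N ℓ) → A) → ℝ) (hw : ∀ ℓ u, 0 ≤ w ℓ u) (hw0 : ∑ u, w 0 u = 1)
    (hcons : ∀ ℓ u, ∑ v with Fin.take (N ℓ) (hN ℓ) v = u, w (ℓ + 1) v = w ℓ u) :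
    ∃ I : (ℓ : ℕ) → (Fin (N ℓ) → A) → Set ℝ,
      (∀ ℓ u, MeasurableSet (I ℓ u) ∧ volume (I ℓ u) = ENNReal.ofReal (w ℓ u) ∧
        I ℓ u ⊆ Ico 0 1) ∧
      (∀ ℓ (x : Ico (0 : ℝ) 1), ∃! u, ↑x ∈ I ℓ u) ∧
      ∀ ℓ v, I (ℓ + 1) v ⊆ I ℓ (Fin.take (N ℓ) (hN ℓ) v) := by
  obtain ⟨L₀, hsub₀, hpart₀⟩ := exists_Ico_partition univ (w 0) (fun u _ => hw 0 u) 0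
  rw [zero_add, hw0] at hsub₀ hpart₀
  choose! refineL hsub hpart using fun ℓ =>
    exists_Ico_refinement (Fin.take (N ℓ) (hN ℓ)) (w ℓ) (w (ℓ + 1)) (hw (ℓ + 1)) (hcons ℓ)
  let L : (ℓ : ℕ) → (Fin (N ℓ) → A) → ℝ :=
    fun ℓ => Nat.rec (motive := fun ℓ => (Fin (N ℓ) → A) → ℝ) L₀ refineL ℓ
  have hlevel : ∀ ℓ, (∀ u, Ico (L ℓ u) (L ℓ u + w ℓ u) ⊆ Ico 0 1) ∧
      ∀ x ∈ Ico (0 : ℝ) 1, ∃! u, x ∈ Ico (L ℓ u) (L ℓ u + w ℓ u) := by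
    intro ℓ
    induction ℓ with
    | zero =>
      refine ⟨fun u => hsub₀ u (Finset.mem_univ u), fun x hx => ?_⟩
      have h := hpart₀ x hx
      simp only [Finset.mem_univ, true_and] at h
      exact h
    | succ ℓ ih =>
      exact ⟨fun v => (hsub ℓ (L ℓ) v).trans (ih.1 _),
        fun x hx => hpart ℓ (L ℓ) x (ih.2 x hx)⟩
  refine ⟨fun ℓ u => Ico (L ℓ u) (L ℓ u + w ℓ u),
    fun ℓ u => ⟨measurableSet_Ico, ?_, (hlevel ℓ).1 u⟩, fun ℓ x => (hlevel ℓ).2 x x.2,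
    fun ℓ v => hsub ℓ (L ℓ) v⟩
  rw [Real.volume_Ico, add_sub_cancel_left]

variable [MeasurableSpace A]

lemma exists_measurable_coding [Finite A] (hN : ∀ ℓ, N ℓ ≤ N (ℓ + 1))
    (hN_top : ∀ n, ∃ ℓ, n < N ℓ)
    (I : (ℓ : ℕ) → (Fin (N ℓ) → A) → Set ℝ) (hI : ∀ ℓ u, MeasurableSet (I ℓ u))
    (hpart : ∀ ℓ (x : Ico (0 : ℝ) 1), ∃! u, ↑x ∈ I ℓ u)
    (hnest : ∀ ℓ v, I (ℓ + 1) v ⊆ I ℓ (Fin.take (N ℓ) (hN ℓ) v)) :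
    ∃ g : Ico (0 : ℝ) 1 → ℕ → A, Measurable g ∧
      ∀ ℓ (a : ℕ → A), g ⁻¹' cylOn (range (N ℓ)) a = Subtype.val ⁻¹' I ℓ (fun i => a i) := by
  choose word hword using hpart
  have hmem : ∀ ℓ x u, ↑x ∈ I ℓ u ↔ word ℓ x = u := fun ℓ x u =>
    ⟨fun h => ((hword ℓ x).2 u h).symm, fun h => h ▸ (hword ℓ x).1⟩
  have hmono : ∀ ℓ ℓ', ℓ ≤ ℓ' → ∀ x i (hi : i < N ℓ) (hi' : i < N ℓ'),
      word ℓ' x ⟨i, hi'⟩ = word ℓ x ⟨i, hi⟩ := by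
    intro ℓ ℓ' hle x i hi
    induction ℓ', hle using Nat.le_induction with
    | base => exact fun _ => rfl
    | succ ℓ' hle ih =>
      intro hi'
      have hi'' := hi.trans_le (monotone_nat_of_le_succ (f := N) hN hle)
      rw [← ih hi'']
      exact (congrFun ((hmem _ x _).1 (hnest ℓ' _ ((hmem _ x _).2 rfl))) ⟨i, hi''⟩).symm
  have hcoord : ∀ ℓ ℓ' x i (hi : i < N ℓ) (hi' : i < N ℓ'),
      word ℓ' x ⟨i, hi'⟩ = word ℓ x ⟨i, hi⟩ := fun ℓ ℓ' x i hi hi' =>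
    (le_total ℓ ℓ').elim (fun h => hmono _ _ h x i hi hi') (fun h => (hmono _ _ h x i hi' hi).symm)
  choose lev hlev using hN_top
  refine ⟨fun x n => word (lev n) x ⟨n, hlev n⟩, measurable_pi_lambda _ fun n => ?_,
    fun ℓ a => ?_⟩
  · refine (measurable_pi_apply _).comp (measurable_to_countable' fun u => ?_)
    convert measurable_subtype_coe (hI (lev n) u)
    ext x
    exact (hmem _ _ _).symm
  · ext x
    simp only [Set.mem_preimage, cylOn, mem_ofPred_eq, Finset.mem_range, hmem, funext_iff,
      Fin.forall_iff]
    exact forall₂_congr fun i hi => by rw [hcoord]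

lemma measurableSet_cylOn [MeasurableSingletonClass A] (F : Finset ℕ) (a : ℕ → A) :
    MeasurableSet (cylOn F a) := by
  convert MeasurableSet.pi F.countable_toSet fun n _ => measurableSet_singleton (a n)
  ext x
  simp [cylOn]

lemma comap_subtype_val_Ico_apply {s : Set ℝ} (hs : s ⊆ Ico 0 1) :
    Measure.comap ((↑) : Ico (0 : ℝ) 1 → ℝ) volume ((↑) ⁻¹' s) = volume s := by
  rw [comap_subtype_coe_apply measurableSet_Ico, Subtype.image_preimage_coe, inter_eq_right.2 hs]

instance isProbabilityMeasure_comap_Ico :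
    IsProbabilityMeasure (Measure.comap ((↑) : Ico (0 : ℝ) 1 → ℝ) volume) where
  measure_univ := by
    rw [← Subtype.coe_preimage_self, comap_subtype_val_Ico_apply subset_rfl]
    simp

theorem exists_isProbabilityMeasure_cylOn [Fintype A] [DecidableEq A]
    [MeasurableSingletonClass A] (hN : ∀ ℓ, N ℓ ≤ N (ℓ + 1)) (hN_top : ∀ n, ∃ ℓ, n < N ℓ)
    (w : (ℓ : ℕ) → (Fin (N ℓ) → A) → ℝ) (hw : ∀ ℓ u, 0 ≤ w ℓ u) (hw0 : ∑ u, w 0 u = 1)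
    (hcons : ∀ ℓ u, ∑ v with Fin.take (N ℓ) (hN ℓ) v = u, w (ℓ + 1) v = w ℓ u) :
    ∃ μ : Measure (ℕ → A), IsProbabilityMeasure μ ∧
      ∀ ℓ (a : ℕ → A), (μ (cylOn (range (N ℓ)) a)).toReal = w ℓ (fun i => a i) := by
  obtain ⟨I, hI, hpart, hnest⟩ := exists_nested_partitions hN w hw hw0 hcons
  obtain ⟨g, hg, hpre⟩ :=
    exists_measurable_coding hN hN_top I (fun ℓ u => (hI ℓ u).1) hpart hnest
  refine ⟨(Measure.comap ((↑) : Ico (0 : ℝ) 1 → ℝ) volume).map g,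
    Measure.isProbabilityMeasure_map hg.aemeasurable, fun ℓ a => ?_⟩
  obtain ⟨_, hvol, hsub⟩ := hI ℓ (fun i => a i)
  rw [Measure.map_apply hg (measurableSet_cylOn _ a), hpre, comap_subtype_val_Ico_apply hsub,
    hvol, ENNReal.toReal_ofReal (hw ℓ _)]

end CylinderMeasure

section SubstitutionWeight

variable {A : Type*} (π : A → Equiv.Perm A) (p : A → ℝ)

def pairWeight (a : ℕ → A) (n : ℕ) : ℝ :=
  ∏ k ∈ range n, p ((π (a (2 * k + 1))).symm (a (2 * k)))

/-- The probability that `ℓ` rounds of the substitution `c ↦ (π c b) c`, `b ∼ p`, started from the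
letter `a (2 ^ ℓ - 1)`, produce `a 0, …, a (2 ^ ℓ - 1)`; the letters `a 1, a 3, …` are the word
produced by the first `ℓ - 1` rounds. -/
def substWeight : ℕ → (ℕ → A) → ℝ
  | 0, _ => 1
  | ℓ + 1, a => substWeight ℓ (fun n => a (2 * n + 1)) * pairWeight π p a (2 ^ ℓ)

lemma prod_Icc_one_eq_prod_range {M : Type*} [CommMonoid M] (f : ℕ → M) (n : ℕ) :
    ∏ m ∈ Icc 1 n, f m = ∏ j ∈ range n, f (j + 1) := by
  rw [← Ico_add_one_right_eq_Icc, prod_Ico_eq_prod_range, Nat.add_sub_cancel]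
  simp only [add_comm 1]

lemma prod_dyadic_succ {M : Type*} [CommMonoid M] (f : ℕ → ℕ → M) (ℓ : ℕ) :
    ∏ m ∈ Icc 1 (ℓ + 1), ∏ k ∈ Icc 1 (2 ^ (ℓ + 1 - m)), f m k =
      (∏ m ∈ Icc 1 ℓ, ∏ k ∈ Icc 1 (2 ^ (ℓ - m)), f (m + 1) k) *
        ∏ k ∈ range (2 ^ ℓ), f 1 (k + 1) := by
  rw [prod_Icc_one_eq_prod_range, prod_range_succ', prod_Icc_one_eq_prod_range,
    prod_Icc_one_eq_prod_range, Nat.add_sub_cancel]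
  congr 1
  refine prod_congr rfl fun j _ => ?_
  rw [show ℓ + 1 - (j + 1 + 1) = ℓ - (j + 1) by omega]

variable {π p}

lemma prod_dyadic_eq_substWeight (ℓ : ℕ) (a : ℕ → A) :
    ∏ m ∈ Icc 1 ℓ, ∏ k ∈ Icc 1 (2 ^ (ℓ - m)),
      p ((π (a (2 ^ m * k - 1))).symm (a (2 ^ (m - 1) * (2 * k - 1) - 1))) =
      substWeight π p ℓ a := by
  induction ℓ generalizing a with
  | zero => simp [substWeight]
  | succ ℓ ih =>
    rw [prod_dyadic_succ, substWeight, ← ih]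
    congr 1
    · refine prod_congr rfl fun m hm => prod_congr rfl fun k hk => ?_
      simp only [mem_Icc] at hm hk
      have hodd : ∀ t, 0 < t → 2 * t - 1 = 2 * (t - 1) + 1 := fun t ht => by omega
      have e1 : 2 ^ (m + 1) * k - 1 = 2 * (2 ^ m * k - 1) + 1 := by
        rw [pow_succ', mul_assoc, hodd _ (Nat.mul_pos (Nat.two_pow_pos _) hk.1)]
      have e2 : 2 ^ (m + 1 - 1) * (2 * k - 1) - 1 =
          2 * (2 ^ (m - 1) * (2 * k - 1) - 1) + 1 := by
        rw [Nat.add_sub_cancel, show m = m - 1 + 1 by omega, pow_succ', Nat.add_sub_cancel,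
          mul_assoc, hodd _ (Nat.mul_pos (Nat.two_pow_pos _) (by omega))]
      rw [e1, e2]
    · refine prod_congr rfl fun k _ => ?_
      congr 3; omega

lemma substWeight_congr {ℓ : ℕ} {a b : ℕ → A} (hab : ∀ n < 2 ^ ℓ, a n = b n) :
    substWeight π p ℓ a = substWeight π p ℓ b := by
  induction ℓ generalizing a b with
  | zero => rfl
  | succ ℓ ih =>
    have h2 : 2 ^ (ℓ + 1) = 2 * 2 ^ ℓ := pow_succ' 2 ℓ
    rw [substWeight, substWeight, ih fun n hn => hab _ (by omega)]
    congr 1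
    refine prod_congr rfl fun k hk => ?_
    rw [mem_range] at hk
    rw [hab (2 * k) (by omega), hab (2 * k + 1) (by omega)]

def splice (m : ℕ) (a c : ℕ → A) : ℕ → A := fun n => if n < m then a n else c (n - m)

lemma splice_odd (m : ℕ) (a c : ℕ → A) :
    (fun n => splice (2 * m) a c (2 * n + 1)) =
      splice m (fun n => a (2 * n + 1)) (fun n => c (2 * n + 1)) := by
  funext n
  simp only [splice]
  split_ifs <;> first | rfl | omega | (congr 1; omega)

lemma splice_two_pow_succ_last (ℓ : ℕ) (a c : ℕ → A) :
    splice (2 ^ ℓ) a c (2 ^ (ℓ + 1) - 1) = c (2 ^ ℓ - 1) := by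
  have := Nat.one_le_two_pow (n := ℓ)
  rw [splice, if_neg (by rw [pow_succ]; omega), pow_succ]
  congr 1
  omega

lemma pairWeight_splice (m n : ℕ) (a c : ℕ → A) :
    pairWeight π p (splice (2 * m) a c) (m + n) = pairWeight π p a m * pairWeight π p c n := by
  unfold pairWeight
  rw [prod_range_add]
  congr 1 <;> refine prod_congr rfl fun k hk => ?_ <;> rw [mem_range] at hk
  · simp only [splice, if_pos (show 2 * k < 2 * m by omega),
      if_pos (show 2 * k + 1 < 2 * m by omega)]
  · simp only [splice, if_neg (show ¬ 2 * (m + k) < 2 * m by omega),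
      if_neg (show ¬ 2 * (m + k) + 1 < 2 * m by omega)]
    rw [show 2 * (m + k) + 1 - 2 * m = 2 * k + 1 by omega,
      show 2 * (m + k) - 2 * m = 2 * k by omega]

lemma substWeight_splice (ℓ : ℕ) (a c : ℕ → A) :
    substWeight π p (ℓ + 1) (splice (2 ^ ℓ) a c) =
      substWeight π p ℓ a * substWeight π p ℓ c *
        p ((π (c (2 ^ ℓ - 1))).symm (a (2 ^ ℓ - 1))) := by
  induction ℓ generalizing a c with
  | zero => simp [substWeight, pairWeight, splice]
  | succ ℓ ih =>
    have hlast : 2 ^ (ℓ + 1) - 1 = 2 * (2 ^ ℓ - 1) + 1 := by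
      have := Nat.one_le_two_pow (n := ℓ); rw [pow_succ]; omega
    have hpair := pairWeight_splice (π := π) (p := p) (2 ^ ℓ) (2 ^ ℓ) a c
    rw [← two_mul] at hpair
    rw [substWeight, pow_succ', splice_odd, ih, hpair, substWeight, substWeight, ← pow_succ',
      hlast]
    ring

end SubstitutionWeight

section Words

variable {A : Type*} [Nonempty A]

noncomputable def wordSeq {n : ℕ} (u : Fin n → A) : ℕ → A :=
  fun k => if h : k < n then u ⟨k, h⟩ else Classical.arbitrary A

lemma wordSeq_of_lt {n : ℕ} (u : Fin n → A) {k : ℕ} (h : k < n) : wordSeq u k = u ⟨k, h⟩ :=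
  dif_pos h

lemma wordSeq_append {m n : ℕ} (u : Fin m → A) (c : Fin n → A) :
    wordSeq (Fin.append u c) = splice m (wordSeq u) (wordSeq c) := by
  funext k
  simp only [wordSeq, splice]
  split_ifs with _ hk hk' <;> try omega
  · exact Fin.append_left u c ⟨k, hk⟩
  · rw [← Fin.append_right u c ⟨k - m, hk'⟩]
    congr 1
    ext
    simp only [Fin.natAdd_mk]
    omega
  · rfl

variable [Fintype A] [DecidableEq A]

lemma sum_filter_take_eq_sum_splice {M : Type*} [AddCommMonoid M] {m n k : ℕ}
    (hk : m + n = k) (h : m ≤ k) (u : Fin m → A) (F : (ℕ → A) → M) :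
    ∑ v : Fin k → A with Fin.take m h v = u, F (wordSeq v) =
      ∑ c : Fin n → A, F (splice m (wordSeq u) (wordSeq c)) := by
  subst hk
  rw [sum_filter, ← (Fin.appendEquiv m n).sum_comp, Fintype.sum_prod_type, sum_comm]
  refine sum_congr rfl fun c _ => ?_
  simp [Fin.appendEquiv, Fin.take_append_left m le_rfl, Fin.take_eq_self, wordSeq_append]

lemma sum_wordSeq_two_pow_succ {M : Type*} [AddCommMonoid M] (ℓ : ℕ) (F : (ℕ → A) → M) :
    ∑ v : Fin (2 ^ (ℓ + 1)) → A, F (wordSeq v) =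
      ∑ u : Fin (2 ^ ℓ) → A, ∑ c : Fin (2 ^ ℓ) → A,
        F (splice (2 ^ ℓ) (wordSeq u) (wordSeq c)) := by
  rw [← sum_fiberwise univ (Fin.take (2 ^ ℓ) (Nat.pow_le_pow_right two_pos ℓ.le_succ))]
  exact sum_congr rfl fun u _ => sum_filter_take_eq_sum_splice (by rw [pow_succ]; omega) _ u F

end Words

section WordVal

variable {A : Type*} [Fintype A] {π : A → Equiv.Perm A} {p q : A → ℝ}

lemma wordVal_eq (hp : ∀ a, 0 < p a) (ℓ : ℕ) (a : ℕ → A) :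
    wordVal π p q ℓ a = q (a (2 ^ ℓ - 1)) * substWeight π p ℓ a := by
  simp only [wordVal, Real.exp_sum, Real.exp_log (hp _), prod_dyadic_eq_substWeight]

lemma wordVal_congr (hp : ∀ a, 0 < p a) {ℓ : ℕ} {a b : ℕ → A} (hab : ∀ n < 2 ^ ℓ, a n = b n) :
    wordVal π p q ℓ a = wordVal π p q ℓ b := by
  rw [wordVal_eq hp, wordVal_eq hp, substWeight_congr hab, hab _ (by simp)]

lemma wordVal_succ (hp : ∀ a, 0 < p a) (ℓ : ℕ) (a : ℕ → A) :
    wordVal π p q (ℓ + 1) a = wordVal π p q ℓ (fun n => a (2 * n + 1)) *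
      ∏ k ∈ range (2 ^ ℓ), p ((π (a (2 * k + 1))).symm (a (2 * k))) := by
  have hlast : 2 ^ (ℓ + 1) - 1 = 2 * (2 ^ ℓ - 1) + 1 := by
    have := Nat.one_le_two_pow (n := ℓ); rw [pow_succ]; omega
  rw [wordVal_eq hp, wordVal_eq hp, substWeight, pairWeight, hlast, mul_assoc]

variable [DecidableEq A] [Nonempty A]

lemma sum_substWeight_mul_last (hpsum : ∑ a, p a = 1) (ℓ : ℕ) (g : A → ℝ) :
    ∑ c : Fin (2 ^ ℓ) → A, substWeight π p ℓ (wordSeq c) * g (wordSeq c (2 ^ ℓ - 1)) =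
      ∑ b, g b := by
  induction ℓ generalizing g with
  | zero =>
    exact Fintype.sum_equiv (Equiv.funUnique (Fin 1) A) _ _ fun c => by
      simp [substWeight, wordSeq, Equiv.funUnique]
  | succ ℓ ih =>
    have hperm : ∀ b, ∑ a, p ((π b).symm a) = 1 := fun b => by
      rw [Equiv.sum_comp, hpsum]
    refine (sum_wordSeq_two_pow_succ ℓ
      (fun x => substWeight π p (ℓ + 1) x * g (x (2 ^ (ℓ + 1) - 1)))).trans ?_
    rw [sum_comm, ← ih g]
    refine sum_congr rfl fun c _ => ?_
    simp_rw [splice_two_pow_succ_last, substWeight_splice]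
    set b := wordSeq c (2 ^ ℓ - 1)
    calc _ = substWeight π p ℓ (wordSeq c) * g b *
          ∑ x : Fin (2 ^ ℓ) → A, substWeight π p ℓ (wordSeq x) *
            p ((π b).symm (wordSeq x (2 ^ ℓ - 1))) := by
          rw [mul_sum]; exact sum_congr rfl fun x _ => by ring
      _ = _ := by rw [ih fun a => p ((π b).symm a), hperm, mul_one]

lemma sum_wordVal (hp : ∀ a, 0 < p a) (hpsum : ∑ a, p a = 1) (hqsum : ∑ a, q a = 1) (ℓ : ℕ) :
    ∑ u : Fin (2 ^ ℓ) → A, wordVal π p q ℓ (wordSeq u) = 1 := by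
  simp_rw [wordVal_eq hp, mul_comm (q _)]
  rw [sum_substWeight_mul_last hpsum, hqsum]

lemma sum_wordVal_splice (hp : ∀ a, 0 < p a) (hpsum : ∑ a, p a = 1)
    (hqinv : ∀ a' : A, ∑ a : A, p ((π a).symm a') * q a = q a') (ℓ : ℕ) (a : ℕ → A) :
    ∑ c : Fin (2 ^ ℓ) → A, wordVal π p q (ℓ + 1) (splice (2 ^ ℓ) a (wordSeq c)) =
      wordVal π p q ℓ a := by
  simp_rw [wordVal_eq hp, splice_two_pow_succ_last, substWeight_splice]
  set g := fun b => p ((π b).symm (a (2 ^ ℓ - 1))) * q b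
  calc _ = substWeight π p ℓ a *
        ∑ c : Fin (2 ^ ℓ) → A, substWeight π p ℓ (wordSeq c) * g (wordSeq c (2 ^ ℓ - 1)) := by
        rw [mul_sum]; exact sum_congr rfl fun c _ => by ring
    _ = _ := by rw [sum_substWeight_mul_last hpsum ℓ g, hqinv, mul_comm]

lemma sum_wordVal_extWord (hp : ∀ a, 0 < p a) (hpsum : ∑ a, p a = 1)
    (hqinv : ∀ a' : A, ∑ a : A, p ((π a).symm a') * q a = q a') (ℓ : ℕ) (a : ℕ → A) :
    ∑ c : Fin (2 ^ ℓ) → A, wordVal π p q (ℓ + 1) (extWord ℓ a c) = wordVal π p q ℓ a := by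
  rw [← sum_wordVal_splice hp hpsum hqinv ℓ a]
  refine sum_congr rfl fun c _ => wordVal_congr hp fun n hn => ?_
  rw [pow_succ] at hn
  simp only [extWord, splice, wordSeq]
  split_ifs <;> first | rfl | omega

lemma sum_filter_take_wordVal (hp : ∀ a, 0 < p a) (hpsum : ∑ a, p a = 1)
    (hqinv : ∀ a' : A, ∑ a : A, p ((π a).symm a') * q a = q a') (ℓ : ℕ)
    (h : 2 ^ ℓ ≤ 2 ^ (ℓ + 1)) (u : Fin (2 ^ ℓ) → A) :
    ∑ v : Fin (2 ^ (ℓ + 1)) → A with Fin.take (2 ^ ℓ) h v = u,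
      wordVal π p q (ℓ + 1) (wordSeq v) = wordVal π p q ℓ (wordSeq u) := by
  rw [sum_filter_take_eq_sum_splice (n := 2 ^ ℓ) (by rw [pow_succ]; omega) h u,
    sum_wordVal_splice hp hpsum hqinv]

end WordVal

theorem stmt12_general {A : Type*} [Fintype A] [DecidableEq A] [Nonempty A]
    [MeasurableSpace A] [MeasurableSingletonClass A]
    (π : A → Equiv.Perm A) (p q : A → ℝ)
    (hp : ∀ a, 0 < p a) (hpsum : ∑ a, p a = 1)
    (hq : ∀ a, 0 < q a) (hqsum : ∑ a, q a = 1)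
    (hqinv : ∀ a' : A, ∑ a : A, p ((π a).symm a') * q a = q a') :
    (∀ (ℓ : ℕ) (a : ℕ → A),
      ∑ c : Fin (2 ^ ℓ) → A, wordVal π p q (ℓ + 1) (extWord ℓ a c) = wordVal π p q ℓ a) ∧
    ∃ μ : Measure (ℕ → A), IsProbabilityMeasure μ ∧
      (∀ (ℓ : ℕ) (a : ℕ → A),
        (μ (cylOn (Finset.range (2 ^ ℓ)) a)).toReal = wordVal π p q ℓ a) ∧
      (∀ (ℓ : ℕ) (a : ℕ → A),
        wordVal π p q (ℓ + 1) a =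
          wordVal π p q ℓ (fun n => a (2 * n + 1)) *
            ∏ k ∈ Finset.range (2 ^ ℓ), p ((π (a (2 * k + 1))).symm (a (2 * k)))) := by
  have hN : ∀ ℓ, 2 ^ ℓ ≤ 2 ^ (ℓ + 1) := fun ℓ => Nat.pow_le_pow_right two_pos ℓ.le_succ
  have hw : ∀ ℓ (u : Fin (2 ^ ℓ) → A), 0 ≤ wordVal π p q ℓ (wordSeq u) := fun ℓ u =>
    mul_nonneg (hq _).le (Real.exp_pos _).le
  obtain ⟨μ, hμ, hcyl⟩ := exists_isProbabilityMeasure_cylOn hN (fun n => ⟨n, n.lt_two_pow_self⟩)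
    (fun ℓ u => wordVal π p q ℓ (wordSeq u)) hw (sum_wordVal hp hpsum hqsum 0)
    (fun ℓ => sum_filter_take_wordVal hp hpsum hqinv ℓ (hN ℓ))
  refine ⟨sum_wordVal_extWord hp hpsum hqinv, μ, hμ, fun ℓ a => ?_, wordVal_succ hp⟩
  rw [hcyl]
  exact wordVal_congr hp fun n hn => wordSeq_of_lt _ hn

/-- for the substitutions σ_b(a) = (π_a b) a with Bernoulli weights p and
q the invariant vector of M(a',a) = p(π_a^{-1}a'), the explicit values wordVal are
consistent and define a probability measure μ_ν on A^ℕ which satisfies the substitution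
fixed-point equation μ_ν[a] = μ_ν[a_2 a_4 ⋯ a_{2^ℓ}] ∏_k p(π_{a_{2k}}^{-1} a_{2k−1}). -/
theorem stmt12 {A : Type*} [Fintype A] [DecidableEq A] [Nonempty A]
    [MeasurableSpace A] [MeasurableSingletonClass A]
    (π : A → Equiv.Perm A) (p q : A → ℝ)
    (hp : ∀ a, 0 < p a) (hp1 : ∀ a, p a < 1) (hpsum : ∑ a, p a = 1)
    (hq : ∀ a, 0 < q a) (hqsum : ∑ a, q a = 1)
    (hqinv : ∀ a' : A, ∑ a : A, p ((π a).symm a') * q a = q a') :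
    (∀ (ℓ : ℕ) (a : ℕ → A),
      ∑ c : Fin (2 ^ ℓ) → A, wordVal π p q (ℓ + 1) (extWord ℓ a c) = wordVal π p q ℓ a) ∧
    ∃ μ : Measure (ℕ → A), IsProbabilityMeasure μ ∧
      (∀ (ℓ : ℕ) (a : ℕ → A),
        (μ (cylOn (Finset.range (2 ^ ℓ)) a)).toReal = wordVal π p q ℓ a) ∧
      (∀ (ℓ : ℕ) (a : ℕ → A),
        wordVal π p q (ℓ + 1) a =
          wordVal π p q ℓ (fun n => a (2 * n + 1)) *
            ∏ k ∈ Finset.range (2 ^ ℓ), p ((π (a (2 * k + 1))).symm (a (2 * k)))) :=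
  stmt12_general π p q hp hpsum hq hqsum hqinv
end

section
/- Let A be a finite alphabet, π_a permutations of A, and S = {σ_b : a ↦ (π_a b) a : b ∈ A}. Then S is primitive: for each ℓ ∈ ℕ and all a, b ∈ A^{2^ℓ} and all n ≥ ℓ + 1, there exist substitution strings s^(1), …, s^(n) ∈ S^{2^ℓ} such that s^(n) ∘ ⋯ ∘ s^(1)(b) has a as a prefix. -/
lemma chainT_append {A S : Type*} [Inhabited A] (subst : S → A → List A) {N : ℕ}
    (l l' : List (Fin N → S)) (b : Fin N → A) :
    chainT subst (l ++ l') b = chainT subst l' (chainT subst l b) := by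
  induction l generalizing b with
  | nil => simp [chainT]
  | cons s rest ih => simp [chainT, ih]

lemma getD_flatten_pairs {A : Type*} [Inhabited A] (l : List (A × A)) (j : ℕ)
    (hj : j < 2 * l.length) :
    ((l.map fun p => [p.1, p.2]).flatten).getD j default =
      if j % 2 = 0 then (l.get ⟨j / 2, by omega⟩).1
      else (l.get ⟨j / 2, by omega⟩).2 := by
  induction l generalizing j with
  | nil => simp at hj
  | cons p rest ih =>
    match j with
    | 0 => simp
    | 1 => simp
    | (j+2) =>
      simp only [List.map_cons, List.flatten_cons, List.cons_append, List.nil_append,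
        List.getD_cons_succ]
      rw [ih j (by simp at hj ⊢; omega)]
      have h1 : (j + 2) % 2 = j % 2 := by omega
      have h2 : (j + 2) / 2 = j / 2 + 1 := by omega
      simp [h1, h2]

lemma step_eq {A : Type*} [Inhabited A] (π : A → Equiv.Perm A)
    (subst : A → A → List A) (hsubst : ∀ b a, subst b a = [(π a) b, a])
    {N : ℕ} (s b : Fin N → A) (i : Fin N) :
    trunc N (applySub subst s b) i =
      if i.1 % 2 = 0 then π (b ⟨i.1 / 2, by omega⟩) (s ⟨i.1 / 2, by omega⟩)
      else b ⟨i.1 / 2, by omega⟩ := by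
  have hl : applySub subst s b =
      ((List.ofFn fun i => (π (b i) (s i), b i)).map fun p => [p.1, p.2]).flatten := by
    unfold applySub
    rw [List.map_ofFn]
    refine congrArg List.flatten (List.ofFn_inj.mpr ?_)
    funext j
    simp [hsubst, Function.comp]
  have hi : i.1 < 2 * (List.ofFn fun i => (π (b i) (s i), b i)).length := by
    simp; omega
  rw [trunc, hl, getD_flatten_pairs _ _ hi]
  split <;> simp [List.get_eq_getElem, List.getElem_ofFn]

lemma reach {A : Type*} [Inhabited A] (π : A → Equiv.Perm A)
    (subst : A → A → List A) (hsubst : ∀ b a, subst b a = [(π a) b, a]) :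
    ∀ (k : ℕ) {N : ℕ}, 2 ^ k ≤ N → ∀ (v b : Fin N → A),
      ∃ ss : List (Fin N → A), ss.length = k + 1 ∧
        ∀ i : Fin N, i.1 < 2 ^ k → chainT subst ss b i = v i := by
  intro k
  induction k with
  | zero =>
    intro N hN v b
    refine ⟨[fun j => (π (b j)).symm (v j)], rfl, ?_⟩
    intro i hi
    show trunc N (applySub subst _ b) i = v i
    rw [step_eq π subst hsubst, if_pos (by omega)]
    have hp : i.1 / 2 < N := by omega
    have he : (⟨i.1 / 2, hp⟩ : Fin N) = i := Fin.ext (show i.1 / 2 = i.1 by omega)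
    show (π (b ⟨i.1 / 2, hp⟩)) ((π (b ⟨i.1 / 2, hp⟩)).symm (v ⟨i.1 / 2, hp⟩)) = v i
    rw [Equiv.apply_symm_apply, he]
  | succ k ih =>
    intro N hN v b
    have hpow : 2 ^ (k+1) = 2 * 2 ^ k := by ring
    have hN' : 2 ^ k ≤ N := by omega
    set v' : Fin N → A := fun i =>
      if h : 2 * i.1 + 1 < N then v ⟨2 * i.1 + 1, h⟩ else default with hv'
    obtain ⟨ss, hlen, hss⟩ := ih hN' v' b
    set c := chainT subst ss b with hc
    set s : Fin N → A := fun j =>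
      (π (c j)).symm (if h : 2 * j.1 < N then v ⟨2 * j.1, h⟩ else default) with hs
    refine ⟨ss ++ [s], by simp [hlen], ?_⟩
    intro i hi
    rw [chainT_append]
    show trunc N (applySub subst s c) i = v i
    rw [step_eq π subst hsubst]
    have hdiv : i.1 / 2 < 2 ^ k := by omega
    have hp : i.1 / 2 < N := by omega
    by_cases hpar : i.1 % 2 = 0
    · rw [if_pos hpar]
      have hlt : 2 * (i.1 / 2) < N := by omega
      show (π (c ⟨i.1/2, hp⟩))
          ((π (c ⟨i.1/2, hp⟩)).symm
            (if h : 2 * (i.1/2) < N then v ⟨2 * (i.1/2), h⟩ else default)) = v i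
      rw [dif_pos hlt, Equiv.apply_symm_apply]
      congr 1
      exact Fin.ext (by simp; omega)
    · rw [if_neg hpar]
      have hlt : 2 * (i.1 / 2) + 1 < N := by omega
      refine (hss ⟨i.1/2, hp⟩ (by simpa using hdiv)).trans ?_
      show (if h : 2 * (i.1/2) + 1 < N then v ⟨2 * (i.1/2) + 1, h⟩ else default) = v i
      rw [dif_pos hlt]
      congr 1
      exact Fin.ext (by simp; omega)

/-- the substitutions σ_b(a) = (π_a b) a (for permutations π_a of a finite
alphabet A) form a primitive collection: for each ℓ, all a, b ∈ A^{2^ℓ} and all n ≥ ℓ+1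
there is a composition of n substitution strings mapping b to a word with prefix a. -/
theorem stmt16 {A : Type*} [Fintype A] [DecidableEq A] [Inhabited A]
    (π : A → Equiv.Perm A)
    (subst : A → A → List A) (hsubst : ∀ b a, subst b a = [(π a) b, a]) :
    ∀ ℓ : ℕ, ∀ a b : Fin (2 ^ ℓ) → A, ∀ n ≥ ℓ + 1,
      ∃ ss : List (Fin (2 ^ ℓ) → A), ss.length = n ∧ chainT subst ss b = a := by
  intro ℓ a b n hn
  set pre : List (Fin (2 ^ ℓ) → A) := List.replicate (n - (ℓ + 1)) (fun _ => default)
    with hpre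
  set b' := chainT subst pre b with hb'
  obtain ⟨ss, hlen, hss⟩ := reach π subst hsubst ℓ (le_refl (2 ^ ℓ)) a b'
  refine ⟨pre ++ ss, by simp [hpre, hlen]; omega, ?_⟩
  rw [chainT_append, ← hb']
  funext i
  exact hss i i.2
end
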